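/- Let G=(V,A) be a connected digraph with nonnegative integer arc weights ω, let 0 ≤ b ≤ c and k ≥ 1 be integers, and let ρ ≥ 0 be an integer. There is a k[b,c]-DWCP solution on G of weight ρ and no k[b,c]-DWCP solution of smaller weight, if and only if ρ is the minimum value of Σ_{j=1}^k Σ_{a ∈ G_j} ω(a) (arcs counted with multiplicity) over all tuples (G_1,...,G_k) of non-empty directed multigraphs satisfying: every arc of each G_j is an arc of G; every vertex of G_1 is balanced; for each 2 ≤ j ≤ k, G_j has no parallel arcs and every vertex of G_j is balanced; and every arc of G occurs, in total, between b and c times in the multiset union G_1 ∪ ... ∪ G_k. In particular, a k[b,c]-DWCP solution on G exists if and only if such a tuple exists. -/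

import Mathlib

/-!
Statement 10: Let G = (V, A) be a connected digraph with nonnegative integer arc weights
ω, let 0 ≤ b ≤ c and k ≥ 1 be integers, and let ρ ≥ 0 be an integer.  There is a
k[b,c]-DWCP solution on G of weight ρ and no k[b,c]-DWCP solution of smaller weight, if
and only if ρ is the minimum value of Σ_j Σ_{a ∈ G_j} ω(a) (arcs counted with
multiplicity) over all tuples (G_1, ..., G_k) of non-empty directed multigraphs such
that: every arc of each G_j is an arc of G; every vertex of G_1 is balanced; for
2 ≤ j ≤ k, G_j has no parallel arcs and every vertex of G_j is balanced; and every arc of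
G occurs, in total, between b and c times in the multiset union G_1 ∪ ... ∪ G_k.  In
particular, a k[b,c]-DWCP solution exists iff such a tuple exists.

A tuple of multigraphs is encoded as `Gs : Fin k → V × V → ℕ` (arc multiplicities),
with `Gs 0` playing the role of G_1.
-/

/-- `L` is the arc list of a (possibly empty) closed directed walk in the digraph
with arc set `A`. -/
def IsClosedWalk {V : Type} (A : Finset (V × V)) (L : List (V × V)) : Prop :=
  (∀ a ∈ L, a ∈ A) ∧ List.Chain' (fun p q => p.2 = q.1) L ∧
    L.getLast?.map Prod.snd = L.head?.map Prod.fst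

/-- The underlying undirected (simple) graph of a digraph. -/
def UGraph {V : Type} (A : Finset (V × V)) : SimpleGraph V :=
  SimpleGraph.fromRel (fun u v => (u, v) ∈ A)

/-- Weight of a walk: sum of the weights of all traversed arcs, counted with
multiplicity. -/
def walkWeight {V : Type} (ω : V × V → ℕ) (L : List (V × V)) : ℕ := (L.map ω).sum

/-- Total weight of a k-tuple of walks. -/
def kWalkWeight {V : Type} (ω : V × V → ℕ) {k : ℕ} (W : Fin k → List (V × V)) : ℕ :=
  ∑ i, walkWeight ω (W i)

/-- A k[b,c]-DWCP solution: `k` non-empty closed directed walks such that every arc of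
the digraph is traversed, in total, at least `b` and at most `c` times. -/
def IsDWCP {V : Type} [Fintype V] [DecidableEq V] (A : Finset (V × V)) (b c k : ℕ)
    (W : Fin k → List (V × V)) : Prop :=
  (∀ i, W i ≠ [] ∧ IsClosedWalk A (W i)) ∧
    ∀ a ∈ A, b ≤ (∑ i, (W i).count a) ∧ (∑ i, (W i).count a) ≤ c

/-- The tuples of multigraphs appearing in the statement: each `Gs j` is non-empty, uses
only arcs of `G`, and is balanced; `Gs j` for `j ≠ 0` has no parallel arcs; and every arc
of `G` occurs between `b` and `c` times in the multiset union of the `Gs j`. -/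
def GoodTuple {V : Type} [Fintype V] (A : Finset (V × V)) (b c k : ℕ)
    (Gs : Fin k → V × V → ℕ) : Prop :=
  (∀ j, ∃ a, Gs j a ≠ 0) ∧
  (∀ j a, Gs j a ≠ 0 → a ∈ A) ∧
  (∀ j (v : V), (∑ u, Gs j (u, v)) = ∑ u, Gs j (v, u)) ∧
  (∀ j : Fin k, (j : ℕ) ≠ 0 → ∀ a, Gs j a ≤ 1) ∧
  (∀ a ∈ A, b ≤ (∑ j, Gs j a) ∧ (∑ j, Gs j a) ≤ c)


/-!
A closed walk has a balanced arc-count vector, and conversely a non-empty balanced multigraph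
contains a simple cycle: follow an out-arc from each vertex of positive in-degree, and take a
periodic orbit of this successor map.

Given a solution, keep from each walk but the first a simple cycle inside it and let the first
multigraph carry all remaining traversals; this tuple has the same arc totals, hence the same
weight. Given a tuple, take a simple cycle in each `G_j`. If `b = 0`, these `k` cycles already
form a solution of no larger weight. If `b ≥ 1`, every arc of `G` is used: the remaining arcs
split into closed walks, and since `G` is connected one of them always shares a vertex with one
of the `k` walks and can be spliced into it. The result is a solution with exactly the arc
totals of the tuple. So every weight of either kind is bounded below by a weight of the other
kind, and the two minima coincide.
-/

open Finset

theorem Function.exists_iterate_mem_periodicPts {α : Type*} [Finite α] (f : α → α) (x : α) :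
    ∃ m, f^[m] x ∈ periodicPts f := by
  obtain ⟨m, n, hmn, h⟩ := Finite.exists_ne_map_eq_of_infinite fun n : ℕ => f^[n] x
  wlog hlt : m < n generalizing m n
  · exact this n m hmn.symm h.symm (by omega)
  refine ⟨m, mk_mem_periodicPts (n := n - m) (by omega) ?_⟩
  change f^[n - m] (f^[m] x) = f^[m] x
  rw [← iterate_add_apply, Nat.sub_add_cancel hlt.le]
  exact h.symm

section ClosedWalk

variable {V : Type} {A : Finset (V × V)} {L L₁ L₂ : List (V × V)} {v : V}

theorem isClosedWalk_iff_cycleChain :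
    IsClosedWalk A L ↔
      (∀ a ∈ L, a ∈ A) ∧ Cycle.Chain (fun p q : V × V => p.2 = q.1) (L : Cycle (V × V)) := by
  refine and_congr_right fun _ => ?_
  show List.IsChain _ L ∧ _ ↔ _
  rcases L with - | ⟨a, t⟩
  · simp
  · rw [Cycle.chain_coe_cons, ← List.cons_append, List.isChain_append]
    simp [List.getLast?_eq_some_getLast (List.cons_ne_nil a t)]

theorem IsClosedWalk.rotate (h : IsClosedWalk A L) (n : ℕ) : IsClosedWalk A (L.rotate n) := by
  rw [isClosedWalk_iff_cycleChain] at h ⊢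
  rw [Cycle.coe_eq_coe.2 (List.IsRotated.forall L n)]
  exact ⟨fun a ha => h.1 a (List.mem_rotate.1 ha), h.2⟩

theorem IsClosedWalk.map_snd_perm (h : IsClosedWalk A L) :
    (L.map Prod.snd).Perm (L.map Prod.fst) := by
  rcases L with - | ⟨a, t⟩
  · simp
  have hchain := (isClosedWalk_iff_cycleChain.1 h).2
  rw [Cycle.chain_coe_cons, ← List.cons_append,
    List.isChain_cons_append_singleton_iff_forall₂] at hchain
  have hsnd : (a :: t).map Prod.snd = (t ++ [a]).map Prod.fst := by
    rw [← List.forall₂_eq_eq_eq, List.forall₂_map_left_iff, List.forall₂_map_right_iff]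
    exact hchain
  rw [hsnd, List.map_append]
  exact List.perm_append_singleton _ _

theorem IsClosedWalk.snd_mem_map_fst (h : IsClosedWalk A L) {a : V × V} (ha : a ∈ L) :
    a.2 ∈ L.map Prod.fst :=
  h.map_snd_perm.subset (List.mem_map_of_mem ha)

theorem exists_rotate_head?_fst (hv : v ∈ L.map Prod.fst) :
    ∃ n, (L.rotate n).head?.map Prod.fst = some v := by
  obtain ⟨a, ha, rfl⟩ := List.mem_map.1 hv
  obtain ⟨i, hi, rfl⟩ := List.mem_iff_getElem.1 ha
  exact ⟨i, by simp [List.head?_rotate hi, List.getElem?_eq_getElem hi]⟩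

theorem IsClosedWalk.append (h₁ : IsClosedWalk A L₁) (h₂ : IsClosedWalk A L₂)
    (hv₁ : L₁.head?.map Prod.fst = some v) (hv₂ : L₂.head?.map Prod.fst = some v) :
    IsClosedWalk A (L₁ ++ L₂) := by
  obtain ⟨hA₁, hc₁, hl₁⟩ := h₁
  obtain ⟨hA₂, hc₂, hl₂⟩ := h₂
  have hne₁ : L₁ ≠ [] := by rintro rfl; simp at hv₁
  have hne₂ : L₂ ≠ [] := by rintro rfl; simp at hv₂
  refine ⟨fun a ha => (List.mem_append.1 ha).elim (hA₁ a) (hA₂ a), ?_, ?_⟩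
  · refine List.isChain_append.2 ⟨hc₁, hc₂, fun x hx y hy => Option.some.inj ?_⟩
    rw [← Option.map_some, ← hx, hl₁, hv₁, ← hv₂, hy, Option.map_some]
  · rw [List.getLast?_append_of_ne_nil _ hne₂, List.head?_append_of_ne_nil _ hne₁, hl₂, hv₂, hv₁]

theorem IsClosedWalk.exists_perm_append (h₁ : IsClosedWalk A L₁) (h₂ : IsClosedWalk A L₂)
    (hv₁ : v ∈ L₁.map Prod.fst) (hv₂ : v ∈ L₂.map Prod.fst) :
    ∃ L, IsClosedWalk A L ∧ L.Perm (L₁ ++ L₂) := by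
  obtain ⟨n₁, hn₁⟩ := exists_rotate_head?_fst hv₁
  obtain ⟨n₂, hn₂⟩ := exists_rotate_head?_fst hv₂
  exact ⟨_, (h₁.rotate n₁).append (h₂.rotate n₂) hn₁ hn₂,
    (List.rotate_perm _ _).append (List.rotate_perm _ _)⟩

open Function in
theorem isClosedWalk_map_periodicOrbit (f : V → V) (y : V)
    (hA : ∀ n, (f^[n] y, f (f^[n] y)) ∈ A) :
    IsClosedWalk A (((List.range (minimalPeriod f y)).map (f^[·] y)).map fun v => (v, f v)) := by
  rw [isClosedWalk_iff_cycleChain, ← Cycle.map_coe, Cycle.chain_map]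
  refine ⟨fun a ha => ?_, (periodicOrbit_chain _).2 fun n _ => (iterate_succ_apply' f n y).symm⟩
  obtain ⟨n, -, rfl⟩ := by simpa using ha
  exact hA n

end ClosedWalk

section Balanced

variable {V : Type} [Fintype V]

def IsBalanced (N : V × V → ℕ) : Prop := ∀ v, ∑ u, N (u, v) = ∑ u, N (v, u)

variable {N M : V × V → ℕ}

theorem IsBalanced.sum {ι : Type*} {s : Finset ι} {N : ι → V × V → ℕ}
    (h : ∀ i ∈ s, IsBalanced (N i)) : IsBalanced fun a => ∑ i ∈ s, N i a := fun v => by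
  rw [sum_comm, sum_comm (f := fun u i => N i (v, u))]
  exact sum_congr rfl fun i hi => h i hi v

theorem IsBalanced.sub (hN : IsBalanced N) (hM : IsBalanced M) (hle : M ≤ N) :
    IsBalanced (N - M) := fun v => by
  simp only [Pi.sub_apply]
  rw [sum_tsub_distrib _ fun u _ => hle (u, v), sum_tsub_distrib _ fun u _ => hle (v, u),
    hN v, hM v]

variable [DecidableEq V] {A : Finset (V × V)}

theorem count_map_snd_eq_sum_count (L : List (V × V)) (v : V) :
    (L.map Prod.snd).count v = ∑ u, L.count (u, v) := by
  induction L with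
  | nil => simp
  | cons a L ih =>
    simp only [List.count_cons, beq_iff_eq, Prod.ext_iff, sum_add_distrib, ← ih, sum_boole,
      Nat.cast_id, List.map_cons, Nat.add_left_cancel_iff]
    split_ifs <;> simp_all [filter_eq]

theorem count_map_fst_eq_sum_count (L : List (V × V)) (v : V) :
    (L.map Prod.fst).count v = ∑ u, L.count (v, u) := by
  induction L with
  | nil => simp
  | cons a L ih =>
    simp only [List.count_cons, beq_iff_eq, Prod.ext_iff, sum_add_distrib, ← ih, sum_boole,
      Nat.cast_id, List.map_cons, Nat.add_left_cancel_iff]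
    split_ifs <;> simp_all [filter_eq]

theorem IsClosedWalk.isBalanced_count {L : List (V × V)} (h : IsClosedWalk A L) :
    IsBalanced (L.count ·) := fun v => by
  rw [← count_map_snd_eq_sum_count, ← count_map_fst_eq_sum_count, h.map_snd_perm.count_eq]

open Function in
theorem IsBalanced.exists_nodup_isClosedWalk (hN : IsBalanced N) (hA : ∀ a, N a ≠ 0 → a ∈ A)
    (hne : ∃ a, N a ≠ 0) :
    ∃ L, L ≠ [] ∧ IsClosedWalk A L ∧ L.Nodup ∧ ∀ a, L.count a ≤ N a := by
  obtain ⟨a₀, ha₀⟩ := hne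
  set P : Set V := {v | ∃ u, N (u, v) ≠ 0}
  have hout : ∀ v, ∃ w, v ∈ P → N (v, w) ≠ 0 := fun v => by
    by_cases hv : v ∈ P
    · obtain ⟨u, hu⟩ := hv
      have : ∑ w, N (v, w) ≠ 0 := hN v ▸ sum_eq_zero_iff.not.2 fun h => hu (h u (mem_univ u))
      obtain ⟨w, -, hw⟩ := exists_ne_zero_of_sum_ne_zero this
      exact ⟨w, fun _ => hw⟩
    · exact ⟨v, fun h => absurd h hv⟩
  choose f hf using hout
  have hP : Set.MapsTo f P P := fun v hv => ⟨v, hf v hv⟩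
  obtain ⟨m, hm⟩ := exists_iterate_mem_periodicPts f a₀.2
  set y := f^[m] a₀.2
  have horbit : ∀ n, N (f^[n] y, f (f^[n] y)) ≠ 0 := fun n => by
    refine hf _ ?_
    rw [← iterate_add_apply]
    exact hP.iterate _ ⟨a₀.1, ha₀⟩
  set L := ((List.range (minimalPeriod f y)).map (f^[·] y)).map fun v => (v, f v)
  have hnodup : L.Nodup := by
    refine List.Nodup.of_map Prod.fst ?_
    simp only [L, List.map_map]
    exact Cycle.nodup_coe_iff.1 nodup_periodicOrbit
  refine ⟨L, ?_, isClosedWalk_map_periodicOrbit f y fun n => hA _ (horbit n), hnodup, fun a => ?_⟩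
  · simpa [L] using (minimalPeriod_pos_of_mem_periodicPts hm).ne'
  by_cases ha : a ∈ L
  · obtain ⟨n, -, rfl⟩ := by simpa [L] using ha
    exact (List.nodup_iff_count_le_one.1 hnodup _).trans (Nat.one_le_iff_ne_zero.2 (horbit n))
  · simp [List.count_eq_zero_of_not_mem ha]

theorem IsClosedWalk.exists_nodup_isClosedWalk_le {L : List (V × V)} (h : IsClosedWalk A L)
    (hne : L ≠ []) :
    ∃ K, K ≠ [] ∧ IsClosedWalk A K ∧ K.Nodup ∧ ∀ a, K.count a ≤ L.count a :=
  h.isBalanced_count.exists_nodup_isClosedWalk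
    (fun a ha => h.1 a (List.count_pos_iff.1 (Nat.pos_of_ne_zero ha)))
    (let ⟨a, ha⟩ := List.exists_mem_of_ne_nil L hne; ⟨a, (List.count_pos_iff.2 ha).ne'⟩)

theorem IsBalanced.exists_closedWalk_decomposition (hN : IsBalanced N)
    (hA : ∀ a, N a ≠ 0 → a ∈ A) :
    ∃ ℓ : List (List (V × V)), (∀ L ∈ ℓ, L ≠ [] ∧ IsClosedWalk A L) ∧
      ∀ a, ℓ.flatten.count a = N a := by
  induction h : ∑ a, N a using Nat.strong_induction_on generalizing N with
  | _ n ih =>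
  by_cases hne : ∃ a, N a ≠ 0
  swap
  · push Not at hne
    exact ⟨[], by simp, by simp [hne]⟩
  obtain ⟨L, hLne, hL, -, hLN⟩ := hN.exists_nodup_isClosedWalk hA hne
  have hlt : ∑ a, (N - (L.count ·)) a < n := by
    obtain ⟨a, ha⟩ := List.exists_mem_of_ne_nil L hLne
    rw [← h, Pi.sub_def, sum_tsub_distrib _ fun a _ => hLN a]
    have : 0 < ∑ a, L.count a :=
      sum_pos' (fun _ _ => Nat.zero_le _) ⟨a, mem_univ a, List.count_pos_iff.2 ha⟩
    have : ∑ a, L.count a ≤ ∑ a, N a := sum_le_sum fun a _ => hLN a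
    omega
  obtain ⟨ℓ, hℓ, hcount⟩ := ih _ hlt (hN.sub hL.isBalanced_count hLN)
    (fun a ha => hA a fun h => ha (by simp [h])) rfl
  refine ⟨L :: ℓ, List.forall_mem_cons.2 ⟨⟨hLne, hL⟩, hℓ⟩, fun a => ?_⟩
  rw [List.flatten_cons, List.count_append, hcount, Pi.sub_apply]
  have := hLN a
  omega

end Balanced

section Merging

variable {V : Type} {A : Finset (V × V)} {ι : Type*}

theorem exists_common_vertex_of_connected (hconn : (UGraph A).Connected)
    {W : ι → List (V × V)} (hW : ∀ j, IsClosedWalk A (W j)) {j₀ : ι} (hj₀ : W j₀ ≠ [])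
    {pool : List (List (V × V))} (hpool : ∀ L ∈ pool, L ≠ [] ∧ IsClosedWalk A L)
    (hne : pool ≠ []) (hcov : ∀ a ∈ A, (∃ j, a ∈ W j) ∨ a ∈ pool.flatten) :
    ∃ L ∈ pool, ∃ j v, v ∈ L.map Prod.fst ∧ v ∈ (W j).map Prod.fst := by
  by_contra! hdisj
  set S : Set V := {v | ∃ j, v ∈ (W j).map Prod.fst}
  have hclosed : ∀ a ∈ A, a.1 ∈ S ↔ a.2 ∈ S := fun a ha => by
    rcases hcov a ha with ⟨j, hj⟩ | hflat
    · exact iff_of_true ⟨j, List.mem_map_of_mem hj⟩ ⟨j, (hW j).snd_mem_map_fst hj⟩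
    · obtain ⟨L, hL, haL⟩ := List.mem_flatten.1 hflat
      exact iff_of_false (fun ⟨j, h⟩ => hdisj L hL j _ (List.mem_map_of_mem haL) h)
        (fun ⟨j, h⟩ => hdisj L hL j _ ((hpool L hL).2.snd_mem_map_fst haL) h)
  obtain ⟨L₀, hL₀⟩ := List.exists_mem_of_ne_nil pool hne
  obtain ⟨t, ht⟩ := List.exists_mem_of_ne_nil (L₀.map Prod.fst) (by simpa using (hpool L₀ hL₀).1)
  obtain ⟨s, hs⟩ := List.exists_mem_of_ne_nil ((W j₀).map Prod.fst) (by simpa using hj₀)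
  obtain ⟨d, -, hdS, hdS'⟩ := (hconn.preconnected s t).some.exists_boundary_dart S
    ⟨j₀, hs⟩ fun ⟨j, h⟩ => hdisj L₀ hL₀ j t ht h
  obtain ⟨-, hd | hd⟩ := d.adj
  · exact hdS' ((hclosed _ hd).1 hdS)
  · exact hdS' ((hclosed _ hd).2 hdS)

variable [DecidableEq V] [Fintype ι] [DecidableEq ι]

theorem exists_merge_closedWalks [Nonempty ι] (hconn : (UGraph A).Connected)
    (pool : List (List (V × V))) (hpool : ∀ L ∈ pool, L ≠ [] ∧ IsClosedWalk A L)
    (W : ι → List (V × V)) (hW : ∀ j, W j ≠ [] ∧ IsClosedWalk A (W j))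
    (hcov : ∀ a ∈ A, 0 < ∑ j, (W j).count a + pool.flatten.count a) :
    ∃ W' : ι → List (V × V), (∀ j, W' j ≠ [] ∧ IsClosedWalk A (W' j)) ∧
      ∀ a, ∑ j, (W' j).count a = ∑ j, (W j).count a + pool.flatten.count a := by
  obtain ⟨n, hn⟩ : ∃ n, pool.length = n := ⟨_, rfl⟩
  induction n generalizing pool W with
  | zero => exact ⟨W, hW, by simp [List.length_eq_zero_iff.1 hn]⟩
  | succ n ih =>
  have hmem : ∀ a ∈ A, (∃ j, a ∈ W j) ∨ a ∈ pool.flatten := fun a ha => by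
    by_contra! h
    simpa [List.count_eq_zero_of_not_mem, h.1, h.2] using hcov a ha
  obtain ⟨L, hL, j, v, hvL, hvW⟩ := exists_common_vertex_of_connected hconn (fun j => (hW j).2)
    (hW (Classical.arbitrary ι)).1 hpool (List.ne_nil_of_length_eq_add_one hn) hmem
  obtain ⟨M, hM, hMperm⟩ := (hW j).2.exists_perm_append (hpool L hL).2 hvW hvL
  have hMne : M ≠ [] := by
    rintro rfl
    exact (hW j).1 (List.append_eq_nil_iff.1 hMperm.nil_eq.symm).1
  have htotal : ∀ a, ∑ i, (Function.update W j M i).count a + (pool.erase L).flatten.count a =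
      ∑ i, (W i).count a + pool.flatten.count a := fun a => by
    have hpool' := ((List.perm_cons_erase hL).flatten).count_eq a
    simp only [List.flatten_cons, List.count_append] at hpool'
    rw [sum_congr rfl fun i _ => Function.apply_update (fun _ L => L.count a) W j M i,
      sum_update_of_mem (mem_univ j), hpool', hMperm.count_eq, List.count_append,
      sum_eq_add_sum_sdiff_singleton_of_mem (mem_univ j) fun i => (W i).count a]
    ring
  have hW₁ : ∀ i, Function.update W j M i ≠ [] ∧ IsClosedWalk A (Function.update W j M i) := by
    intro i
    rcases eq_or_ne i j with rfl | hij
    · simpa using ⟨hMne, hM⟩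
    · simpa [Function.update_of_ne hij] using hW i
  obtain ⟨W', hW', hcount⟩ := ih (pool.erase L)
    (fun L' hL' => hpool L' (List.mem_of_mem_erase hL')) _ hW₁
    (fun a ha => htotal a ▸ hcov a ha) (by rw [List.length_erase_of_mem hL, hn]; rfl)
  exact ⟨W', hW', fun a => (hcount a).trans (htotal a)⟩

end Merging

theorem sum_sum_mul_eq_sum_total {ι κ : Type*} [Fintype ι] [Fintype κ] (ω : κ → ℕ)
    (G : ι → κ → ℕ) : ∑ j, ∑ a, G j a * ω a = ∑ a, (∑ j, G j a) * ω a := by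
  simp only [sum_mul]
  exact sum_comm

section Tuples

variable {V : Type} [Fintype V] [DecidableEq V] {A : Finset (V × V)} {b c k : ℕ}

theorem walkWeight_eq_sum_count (ω : V × V → ℕ) (L : List (V × V)) :
    walkWeight ω L = ∑ a, L.count a * ω a := by
  induction L with
  | nil => simp [walkWeight]
  | cons x L ih =>
    simp only [walkWeight] at ih
    simp [walkWeight, List.count_cons, add_mul, sum_add_distrib, ih, add_comm]

theorem kWalkWeight_eq_sum_total (ω : V × V → ℕ) (W : Fin k → List (V × V)) :
    kWalkWeight ω W = ∑ a, (∑ j, (W j).count a) * ω a := by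
  simp only [kWalkWeight, walkWeight_eq_sum_count]
  exact sum_sum_mul_eq_sum_total ω fun j a => (W j).count a

theorem IsDWCP.exists_goodTuple (hk : 1 ≤ k) {W : Fin k → List (V × V)}
    (hW : IsDWCP A b c k W) :
    ∃ Gs, GoodTuple A b c k Gs ∧ ∀ a, ∑ j, Gs j a = ∑ j, (W j).count a := by
  obtain ⟨hW, hbc⟩ := hW
  choose K hKne hK hKnodup hKle using fun j => (hW j).2.exists_nodup_isClosedWalk_le (hW j).1
  set z : Fin k := ⟨0, hk⟩
  set T : V × V → ℕ := fun a => ∑ j, (W j).count a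
  set S : V × V → ℕ := fun a => ∑ j ∈ univ \ {z}, (K j).count a
  have hST : ∀ a, S a + (W z).count a ≤ T a := fun a => by
    simp only [S, T]
    rw [sum_eq_add_sum_sdiff_singleton_of_mem (mem_univ z) fun j => (W j).count a, add_comm]
    exact Nat.add_le_add_left (sum_le_sum fun j _ => hKle j a) _
  set Gs := Function.update (fun j a => (K j).count a) z (T - S)
  have hGz : Gs z = T - S := Function.update_self _ _ _
  have hGj : ∀ j ≠ z, Gs j = fun a => (K j).count a := fun j hj => Function.update_of_ne hj _ _
  have hsum : ∀ a, ∑ j, Gs j a = T a := fun a => by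
    rw [sum_eq_add_sum_sdiff_singleton_of_mem (mem_univ z), hGz,
      sum_congr rfl fun j hj => congrFun (hGj j (by simpa using hj)) a, Pi.sub_apply]
    exact Nat.sub_add_cancel ((Nat.le_add_right _ _).trans (hST a))
  refine ⟨Gs, ⟨?_, ?_, ?_, fun j hj a => ?_, fun a ha => hsum a ▸ hbc a ha⟩, hsum⟩
  · refine (Function.forall_update_iff _ fun _ (G : V × V → ℕ) => ∃ a, G a ≠ 0).2
      ⟨?_, fun j _ => ?_⟩
    · obtain ⟨a, ha⟩ := List.exists_mem_of_ne_nil _ (hW z).1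
      have := hST a
      have := List.count_pos_iff.2 ha
      exact ⟨a, by rw [Pi.sub_apply]; omega⟩
    · obtain ⟨a, ha⟩ := List.exists_mem_of_ne_nil _ (hKne j)
      exact ⟨a, (List.count_pos_iff.2 ha).ne'⟩
  · refine (Function.forall_update_iff _ fun _ (G : V × V → ℕ) => ∀ a, G a ≠ 0 → a ∈ A).2
      ⟨fun a ha => ?_, fun j _ a ha => (hK j).1 a (List.count_pos_iff.1 (Nat.pos_of_ne_zero ha))⟩
    obtain ⟨i, -, hi⟩ := exists_ne_zero_of_sum_ne_zero fun h : T a = 0 => ha (by simp [h])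
    exact (hW i).2.1 a (List.count_pos_iff.1 (Nat.pos_of_ne_zero hi))
  · have hT : IsBalanced T := IsBalanced.sum fun i _ => (hW i).2.isBalanced_count
    have hS : IsBalanced S := IsBalanced.sum fun i _ => (hK i).isBalanced_count
    exact (Function.forall_update_iff _ fun _ (G : V × V → ℕ) => IsBalanced G).2
      ⟨hT.sub hS fun a => (Nat.le_add_right _ _).trans (hST a),
        fun j _ => (hK j).isBalanced_count⟩
  · rw [hGj j fun h => hj (congrArg Fin.val h)]
    exact List.nodup_iff_count_le_one.1 (hKnodup j) a

theorem GoodTuple.exists_isDWCP (hconn : (UGraph A).Connected) (hk : 1 ≤ k)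
    {Gs : Fin k → V × V → ℕ} (hG : GoodTuple A b c k Gs) :
    ∃ W : Fin k → List (V × V), IsDWCP A b c k W ∧ ∀ a, ∑ j, (W j).count a ≤ ∑ j, Gs j a := by
  obtain ⟨hne, hA, hbal, -, hbc⟩ := hG
  choose K hKne hK _ hKle using fun j =>
    IsBalanced.exists_nodup_isClosedWalk (hbal j) (hA j) (hne j)
  have hKsum : ∀ a, ∑ j, (K j).count a ≤ ∑ j, Gs j a := fun a => sum_le_sum fun j _ => hKle j a
  rcases Nat.eq_zero_or_pos b with rfl | hb
  · exact ⟨K, ⟨fun j => ⟨hKne j, hK j⟩, fun a ha => ⟨Nat.zero_le _, (hKsum a).trans (hbc a ha).2⟩⟩,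
      hKsum⟩
  set R := (fun a => ∑ j, Gs j a) - fun a => ∑ j, (K j).count a
  have hR : IsBalanced R := (IsBalanced.sum fun j _ => hbal j).sub
    (IsBalanced.sum fun j _ => (hK j).isBalanced_count) hKsum
  obtain ⟨pool, hpool, hpoolcount⟩ := hR.exists_closedWalk_decomposition (A := A) fun a ha => by
    have : ∑ j, Gs j a ≠ 0 := fun h => ha (by simp [R, h])
    obtain ⟨j, -, hj⟩ := exists_ne_zero_of_sum_ne_zero this
    exact hA j a hj
  have htotal : ∀ a, ∑ j, (K j).count a + pool.flatten.count a = ∑ j, Gs j a := fun a => by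
    simp only [hpoolcount, R, Pi.sub_apply]
    have := hKsum a
    omega
  have : Nonempty (Fin k) := ⟨⟨0, hk⟩⟩
  obtain ⟨W, hW, hWcount⟩ := exists_merge_closedWalks hconn pool hpool K
    (fun j => ⟨hKne j, hK j⟩) fun a ha => htotal a ▸ hb.trans_le (hbc a ha).1
  refine ⟨W, ⟨hW, fun a ha => ?_⟩, fun a => ((hWcount a).trans (htotal a)).le⟩
  rw [hWcount, htotal]
  exact hbc a ha

end Tuples

theorem isLeast_iff_of_subset_of_forall_exists_le {α : Type*} [PartialOrder α] {S T : Set α}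
    (hST : S ⊆ T) (hTS : ∀ t ∈ T, ∃ s ∈ S, s ≤ t) {a : α} : IsLeast S a ↔ IsLeast T a := by
  constructor
  · rintro ⟨haS, ha⟩
    exact ⟨hST haS, fun t ht => let ⟨s, hs, hst⟩ := hTS t ht; (ha hs).trans hst⟩
  · rintro ⟨haT, ha⟩
    obtain ⟨s, hs, hsa⟩ := hTS a haT
    exact ⟨le_antisymm hsa (ha (hST hs)) ▸ hs, fun s hs => ha (hST hs)⟩

theorem stmt10_general {V : Type} [Fintype V] [DecidableEq V] (A : Finset (V × V))
    (ω : V × V → ℕ) (hconn : (UGraph A).Connected)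
    (b c k : ℕ) (hk : 1 ≤ k) (ρ : ℕ) :
    (IsLeast {w : ℕ | ∃ W : Fin k → List (V × V),
        IsDWCP A b c k W ∧ kWalkWeight ω W = w} ρ ↔
      IsLeast {w : ℕ | ∃ Gs : Fin k → V × V → ℕ,
        GoodTuple A b c k Gs ∧ (∑ j, ∑ a, Gs j a * ω a) = w} ρ) ∧
    ((∃ W : Fin k → List (V × V), IsDWCP A b c k W) ↔
      ∃ Gs : Fin k → V × V → ℕ, GoodTuple A b c k Gs) := by
  refine ⟨isLeast_iff_of_subset_of_forall_exists_le ?_ ?_,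
    fun ⟨W, hW⟩ => (hW.exists_goodTuple hk).imp fun _ h => h.1,
    fun ⟨Gs, hG⟩ => (hG.exists_isDWCP hconn hk).imp fun _ h => h.1⟩
  · rintro _ ⟨W, hW, rfl⟩
    obtain ⟨Gs, hG, hcount⟩ := hW.exists_goodTuple hk
    refine ⟨Gs, hG, ?_⟩
    simp only [sum_sum_mul_eq_sum_total, kWalkWeight_eq_sum_total, hcount]
  · rintro _ ⟨Gs, hG, rfl⟩
    obtain ⟨W, hW, hcount⟩ := hG.exists_isDWCP hconn hk
    refine ⟨_, ⟨W, hW, rfl⟩, ?_⟩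
    rw [sum_sum_mul_eq_sum_total, kWalkWeight_eq_sum_total]
    exact sum_le_sum fun a _ => Nat.mul_le_mul_right _ (hcount a)

theorem stmt10 {V : Type} [Fintype V] [DecidableEq V] (A : Finset (V × V))
    (ω : V × V → ℕ) (hloop : ∀ v : V, (v, v) ∉ A) (hconn : (UGraph A).Connected)
    (b c k : ℕ) (hbc : b ≤ c) (hk : 1 ≤ k) (ρ : ℕ) :
    (IsLeast {w : ℕ | ∃ W : Fin k → List (V × V),
        IsDWCP A b c k W ∧ kWalkWeight ω W = w} ρ ↔
      IsLeast {w : ℕ | ∃ Gs : Fin k → V × V → ℕ,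
        GoodTuple A b c k Gs ∧ (∑ j, ∑ a, Gs j a * ω a) = w} ρ) ∧
    ((∃ W : Fin k → List (V × V), IsDWCP A b c k W) ↔
      ∃ Gs : Fin k → V × V → ℕ, GoodTuple A b c k Gs) :=
  stmt10_general A ω hconn b c k hk ρ
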